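/- Let R be a commutative ring in which every strong parameter sequence x satisfies p-grade((x)R, R) = ℓ(x). Then every strong parameter sequence on R is a regular sequence (i.e., R is Cohen-Macaulay). -/

import Mathlib

/-!
Induct along the sequence. Suppose `x₁, …, xₙ` is regular and p-grade `(x₁, …, xₙ₊₁) > n`. Then in
some polynomial ring `S = R[t₁, …, tₘ]` the extended ideal contains an `S`-regular sequence of
length `n + 1`, so the Koszul cohomology `H^j(x₁, …, xₙ₊₁; S)` vanishes for `j ≤ n`. As `S` is flat
over `R`, `x₁, …, xₙ` is `S`-regular too, and reducing modulo it lowers the vanishing range by `n`: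
`H^0(x₁, …, xₙ₊₁; S/(x₁, …, xₙ)S) = 0`. So an element of `R/(x₁, …, xₙ)` killed by `xₙ₊₁`, hence by
the whole ideal, vanishes in `S/(x₁, …, xₙ)S`, which contains `R/(x₁, …, xₙ)`.
-/

/-- The natural map between localizations of a module at powers of two elements
`a ∣ b`, sending `m/1` to `m/1`. -/

noncomputable def cechLoc {R : Type*} [CommRing R] {M : Type*} [AddCommGroup M] [Module R M]
    (a b : R) (hab : a ∣ b) :
    LocalizedModule (Submonoid.powers a) M →ₗ[R] LocalizedModule (Submonoid.powers b) M :=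
  LocalizedModule.lift _ (LocalizedModule.mkLinearMap (Submonoid.powers b) M) (by
    rintro ⟨s, n, rfl⟩
    obtain ⟨c, rfl⟩ := hab
    set f := algebraMap R (Module.End R (LocalizedModule (Submonoid.powers (a * c)) M)) with hf
    obtain ⟨u, hu⟩ := IsLocalizedModule.map_units
      (LocalizedModule.mkLinearMap (Submonoid.powers (a * c)) M)
      (⟨(a * c) ^ n, n, rfl⟩ : Submonoid.powers (a * c))
    have hcomm : Commute (f (a ^ n)) ↑u := by
      have : Commute (f (a ^ n)) (f ((a * c) ^ n)) := by
        simp only [Commute, SemiconjBy, ← map_mul, mul_comm]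
      rwa [← hu] at this
    refine ⟨⟨f (a ^ n), f (c ^ n) * ↑u⁻¹, ?_, ?_⟩, rfl⟩
    · rw [← mul_assoc, ← map_mul, ← mul_pow, ← hu]
      exact u.mul_inv
    · rw [mul_assoc, ← (hcomm.units_inv_right).eq, ← mul_assoc, ← map_mul]
      have : c ^ n * a ^ n = (a * c) ^ n := by ring
      rw [this, ← hu]
      exact u.mul_inv)

open scoped BigOperators
open Classical

noncomputable section

universe u
variable {R : Type u} [CommRing R]

/-- Degree `i` term of the Čech complex of the sequence `x` with coefficients in `M`:
the product over `i`-element subsets `t` of the index set of the localization of `M`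
at the product of the `x j` for `j ∈ t`. -/
noncomputable abbrev CechC {ℓ : ℕ} (x : Fin ℓ → R) (M : Type*) [AddCommGroup M] [Module R M]
    (i : ℕ) : Type _ :=
  ∀ t : {t : Finset (Fin ℓ) // t.card = i}, LocalizedModule (Submonoid.powers (∏ j ∈ t.1, x j)) M

/-- The Čech differential `C^i → C^{i+1}`: the alternating sum of the further-localization
maps. -/
noncomputable def cechD {ℓ : ℕ} (x : Fin ℓ → R) (M : Type*) [AddCommGroup M] [Module R M]
    (i : ℕ) : CechC x M i →ₗ[R] CechC x M (i + 1) where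
  toFun m t := ∑ j ∈ (t.1).attach,
    ((-1 : ℤ) ^ ((t.1.filter (· < j.1)).card)) •
      cechLoc (∏ k ∈ t.1.erase j.1, x k) (∏ k ∈ t.1, x k)
        (Finset.prod_dvd_prod_of_subset _ _ _ (Finset.erase_subset _ _))
        (m ⟨t.1.erase j.1, by rw [Finset.card_erase_of_mem j.2, t.2]; omega⟩)
  map_add' := by
    intro a b
    funext t
    simp [Pi.add_apply, map_add, smul_add, Finset.sum_add_distrib]
    all_goals (rw [← Finset.sum_add_distrib]; refine Finset.sum_congr rfl fun j _ => ?_; first | exact smul_add _ _ _ | exact zsmul_add _ _ _ | exact (smul_add _ _ _ :))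
  map_smul' := by
    intro r a
    funext t
    simp [Pi.smul_apply, map_smul, Finset.smul_sum, smul_comm r]

/-- The submodule of Čech coboundaries in degree `i`. -/
noncomputable def cechPrevRange {ℓ : ℕ} (x : Fin ℓ → R) (M : Type*) [AddCommGroup M]
    [Module R M] : (i : ℕ) → Submodule R (CechC x M i)
  | 0 => ⊥
  | (i + 1) => LinearMap.range (cechD x M i)

/-- The `i`-th Čech cohomology of `M` with respect to the sequence `x`:
cocycles modulo coboundaries. -/
noncomputable abbrev CechH {ℓ : ℕ} (x : Fin ℓ → R) (M : Type*) [AddCommGroup M] [Module R M]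
    (i : ℕ) : Type _ :=
  LinearMap.ker (cechD x M i) ⧸
    (cechPrevRange x M i).comap (LinearMap.ker (cechD x M i)).subtype


/-- Degree `i` term of the Koszul complex on `ℓ` elements: free module indexed by
`i`-element subsets of the index set. -/
abbrev KoszulC (R : Type*) [CommRing R] (ℓ i : ℕ) : Type _ :=
  {t : Finset (Fin ℓ) // t.card = i} → R

/-- The Koszul differential `K_{i+1} → K_i` for the sequence `x^k = x_1^k, ..., x_ℓ^k`. -/
noncomputable def koszulD {ℓ : ℕ} (x : Fin ℓ → R) (k : ℕ) (i : ℕ) :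
    KoszulC R ℓ (i + 1) →ₗ[R] KoszulC R ℓ i where
  toFun m s := ∑ j ∈ (s.1ᶜ).attach,
    ((-1 : ℤ) ^ ((s.1.filter (· < j.1)).card)) •
      ((x j.1 ^ k) * m ⟨insert j.1 s.1, by
        rw [Finset.card_insert_of_notMem (Finset.mem_compl.mp j.2), s.2]⟩)
  map_add' := by
    intro a b
    funext s
    simp [mul_add, smul_add, Finset.sum_add_distrib]
  map_smul' := by
    intro r a
    funext s
    simp [Finset.mul_sum, mul_smul_comm, mul_left_comm]
  
/-- The standard transition chain map `K(x^m) → K(x^n)` (for `n ≤ m`) in degree `i`: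
multiplication on the component indexed by `t` by `∏_{j ∈ t} x_j^{m-n}`. -/
noncomputable def koszulTr {ℓ : ℕ} (x : Fin ℓ → R) (m n i : ℕ) :
    KoszulC R ℓ i →ₗ[R] KoszulC R ℓ i where
  toFun z t := (∏ j ∈ t.1, x j ^ (m - n)) * z t
  map_add' := by intro a b; funext t; simp [mul_add]
  map_smul' := by intro r a; funext t; simp; ring

/-- A finite sequence `x` is weakly proregular if for each `n` there is `m ≥ n` such that
the transition maps `H_i(x^m; R) → H_i(x^n; R)` on Koszul homology vanish for all `i ≥ 1`;
equivalently, the transition image of every cycle is a boundary. -/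
def WeaklyProregular {ℓ : ℕ} (x : Fin ℓ → R) : Prop :=
  ∀ n : ℕ, 1 ≤ n → ∃ m, n ≤ m ∧ ∀ i : ℕ, ∀ z : KoszulC R ℓ (i + 1),
    koszulD x m i z = 0 →
      ∃ b : KoszulC R ℓ (i + 1 + 1), koszulD x n (i + 1) b = koszulTr x m n (i + 1) z

/-- The height of an ideal: the infimum of the heights of the primes containing it. -/
noncomputable def idealHeight (I : Ideal R) : ℕ∞ :=
  ⨅ p : {p : PrimeSpectrum R // I ≤ p.asIdeal}, Order.height p.1


/-- A finite sequence `x` (given as a list `l`) is a parameter sequence on `R` if it is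
weakly proregular, generates a proper ideal, and the localized top Čech cohomology
`H^{ℓ(x)}_x(R)_p` is nonzero for every prime `p` containing `(x)R`. -/
def IsParamSeq (l : List R) : Prop :=
  WeaklyProregular l.get ∧ Ideal.span {a | a ∈ l} ≠ ⊤ ∧
    ∀ p : PrimeSpectrum R, Ideal.span {a | a ∈ l} ≤ p.asIdeal →
      Nontrivial (LocalizedModule p.asIdeal.primeCompl (CechH l.get R l.length))

/-- A strong parameter sequence: every initial segment is a parameter sequence. -/
def IsStrongParamSeq (l : List R) : Prop :=
  ∀ i : ℕ, i ≤ l.length → IsParamSeq (l.take i)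


/-- `PossiblyImproperRegular R l N`: the list `l` is a possibly improper regular sequence on
the `R`-module `N`. -/
def PossiblyImproperRegular (R : Type u) [CommRing R] :
    List R → (N : Type u) → [inst : AddCommGroup N] → [inst2 : Module R N] → Prop
  | [], _, _, _ => True
  | a :: as, N, _, _ => (∀ m : N, a • m = 0 → m = 0) ∧
      PossiblyImproperRegular R as (N ⧸ (Ideal.span {a} • (⊤ : Submodule R N)))

variable (R) in
/-- The list `l` is a regular sequence on the ring `R`. -/
def IsRegularSeq (l : List R) : Prop :=
  PossiblyImproperRegular R l R ∧ Ideal.span {a | a ∈ l} ≠ ⊤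

/-- The classical grade of an ideal `I` on an `R`-module `N`: the supremum of lengths of
possibly improper regular sequences on `N` contained in `I`. -/
noncomputable def classicalGrade (I : Ideal R) (N : Type u) [AddCommGroup N] [Module R N] :
    ℕ∞ :=
  ⨆ (l : List R) (_ : ∀ a ∈ l, a ∈ I) (_ : PossiblyImproperRegular R l N), (l.length : ℕ∞)

/-- The polynomial grade of an ideal `I` of `R`: the limit (supremum) over `m` of the
classical grades of `I·R[t_1, ..., t_m]` on `R[t_1, ..., t_m]`. -/
noncomputable def pgrade (I : Ideal R) : ℕ∞ :=
  ⨆ m : ℕ, classicalGrade (I.map (algebraMap R (MvPolynomial (Fin m) R)))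
    (MvPolynomial (Fin m) R)

open Finset RingTheory.Sequence
open scoped Pointwise

lemma QuotSMulTop.mk_eq_zero_iff {S M : Type*} [CommRing S] [AddCommGroup M] [Module S M]
    {x : S} {m : M} : (Submodule.Quotient.mk m : QuotSMulTop x M) = 0 ↔ ∃ u, x • u = m := by
  simp [Submodule.mem_smul_pointwise_iff_exists]

namespace Koszul

variable {S M N : Type*} [CommRing S] [AddCommGroup M] [Module S M] [AddCommGroup N] [Module S N]
  {r : ℕ}

def sign (j : Fin r) (t : Finset (Fin r)) : S :=
  (-1) ^ #{k ∈ t | k < j}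

lemma sign_mul_self (j : Fin r) (t : Finset (Fin r)) : (sign j t : S) * sign j t = 1 := by
  rw [sign, ← pow_add]
  exact Even.neg_one_pow ⟨_, rfl⟩

lemma sign_singleton (j : Fin r) : (sign j {j} : S) = 1 := by
  simp [sign, filter_singleton]

lemma sign_erase_of_not_lt {j k : Fin r} (t : Finset (Fin r)) (hkj : ¬k < j) :
    (sign j (t.erase k) : S) = sign j t := by
  rw [sign, sign, filter_erase, erase_eq_of_notMem]
  simp [hkj]

lemma sign_erase_of_lt {j k : Fin r} {t : Finset (Fin r)} (hk : k ∈ t) (hkj : k < j) :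
    (sign j (t.erase k) : S) = -sign j t := by
  have hmem : k ∈ {x ∈ t | x < j} := mem_filter.2 ⟨hk, hkj⟩
  rw [sign, sign, filter_erase, card_erase_of_mem hmem,
    ← Nat.sub_add_cancel (card_pos.2 ⟨k, hmem⟩), pow_succ, Nat.add_sub_cancel]
  ring

lemma sign_mul_sign_erase {j k : Fin r} {t : Finset (Fin r)} (hj : j ∈ t) (hk : k ∈ t)
    (hne : j ≠ k) :
    (sign j t : S) * sign k (t.erase j) = -(sign k t * sign j (t.erase k)) := by
  rcases hne.lt_or_gt with h | h
  · rw [sign_erase_of_lt hj h, sign_erase_of_not_lt _ h.not_gt]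
    ring
  · rw [sign_erase_of_not_lt _ h.not_gt, sign_erase_of_lt hk h]
    ring

lemma sign_erase_mul_sign_erase {i j : Fin r} {t : Finset (Fin r)} (hi : i ∈ t) (hj : j ∈ t)
    (hne : i ≠ j) :
    (sign j (t.erase i) : S) * sign i (t.erase j) = -(sign i t * sign j t) := by
  rcases hne.lt_or_gt with h | h
  · rw [sign_erase_of_lt hi h, sign_erase_of_not_lt _ h.not_gt]
    ring
  · rw [sign_erase_of_not_lt _ h.not_gt, sign_erase_of_lt hj h]
    ring

variable (M) in
/-- The Koszul cochain complex `Hom(K(a), M)`: a cochain is a function `Finset (Fin r) → M`, whose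
degree-`j` component is its restriction to the `j`-element sets. -/
def diff (a : Fin r → S) : (Finset (Fin r) → M) →ₗ[S] (Finset (Fin r) → M) where
  toFun c t := ∑ j ∈ t, (sign j t * a j) • c (t.erase j)
  map_add' c c' := by
    ext t
    simp [sum_add_distrib]
  map_smul' x c := by
    ext t
    simp [smul_sum, smul_comm x]

variable (a : Fin r → S)

lemma diff_apply (c : Finset (Fin r) → M) (t : Finset (Fin r)) :
    diff M a c t = ∑ j ∈ t, (sign j t * a j) • c (t.erase j) := rfl

lemma diff_singleton (c : Finset (Fin r) → M) (i : Fin r) : diff M a c {i} = a i • c ∅ := by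
  simp [diff_apply, sign_singleton]

lemma diff_congr {c c' : Finset (Fin r) → M} {m : ℕ} (h : ∀ s, #s = m → c s = c' s)
    {t : Finset (Fin r)} (ht : #t = m + 1) : diff M a c t = diff M a c' t :=
  sum_congr rfl fun j hj => by rw [h _ (by rw [card_erase_of_mem hj, ht]; rfl)]

lemma diff_comp {F : Type*} [FunLike F M N] [LinearMapClass F S M N] (f : F)
    (c : Finset (Fin r) → M) (t : Finset (Fin r)) :
    diff N a (f ∘ c) t = f (diff M a c t) := by
  simp [diff_apply]

lemma diff_diff (c : Finset (Fin r) → M) : diff M a (diff M a c) = 0 := by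
  ext t
  simp only [diff_apply, smul_sum, Pi.zero_apply, smul_smul]
  rw [sum_sigma']
  refine sum_involution (fun p _ => ⟨p.2, p.1⟩) ?_ ?_ ?_ ?_
  · rintro ⟨j, k⟩ hp
    simp only [mem_sigma, mem_erase] at hp
    obtain ⟨hj, hkj, hk⟩ := hp
    rw [erase_right_comm, ← add_smul]
    convert zero_smul S _
    linear_combination (a j * a k) * sign_mul_sign_erase (S := S) hj hk (Ne.symm hkj)
  · rintro ⟨j, k⟩ hp _ h
    simp only [mem_sigma, mem_erase] at hp
    exact hp.2.1 (congrArg Sigma.fst h)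
  · rintro ⟨j, k⟩ hp
    simp only [mem_sigma, mem_erase] at hp ⊢
    exact ⟨hp.2.2, Ne.symm hp.2.1, hp.1⟩
  · intros
    rfl

variable (S) in
def contract (i : Fin r) (c : Finset (Fin r) → M) (t : Finset (Fin r)) : M :=
  if i ∈ t then 0 else (sign i (insert i t) : S) • c (insert i t)

lemma diff_contract_add_contract_diff (i : Fin r) (c : Finset (Fin r) → M) (t : Finset (Fin r)) :
    diff M a (contract S i c) t + contract S i (diff M a c) t = a i • c t := by
  by_cases hi : i ∈ t
  · rw [contract, if_pos hi, add_zero, diff_apply, sum_eq_single_of_mem i hi]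
    · rw [contract, if_neg (notMem_erase i t), insert_erase hi, smul_smul,
        mul_right_comm, sign_mul_self, one_mul]
    · intro j hj hji
      rw [contract, if_pos (mem_erase.2 ⟨fun h => hji h.symm, hi⟩), smul_zero]
  · set t' := insert i t
    have hdiff : diff M a (contract S i c) t =
        ∑ j ∈ t, (sign j t * a j * sign i (t'.erase j)) • c (t'.erase j) := by
      refine sum_congr rfl fun j hj => ?_
      have hij : i ≠ j := fun h => hi (h ▸ hj)
      rw [contract, if_neg fun h => hi (mem_of_mem_erase h), erase_insert_of_ne hij, smul_smul]
    have hcontract : contract S i (diff M a c) t = a i • c t +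
        ∑ j ∈ t, (sign i t' * (sign j t' * a j)) • c (t'.erase j) := by
      rw [contract, if_neg hi, diff_apply, sum_insert hi, smul_add, smul_sum, erase_insert hi,
        smul_smul, ← mul_assoc, sign_mul_self, one_mul]
      simp only [smul_smul, t']
    rw [hdiff, hcontract, add_left_comm, ← sum_add_distrib, add_eq_left]
    refine sum_eq_zero fun j hj => ?_
    have hsign := sign_erase_mul_sign_erase (S := S) (mem_insert_self i t)
      (mem_insert_of_mem hj) fun h => hi (h ▸ hj)
    rw [erase_insert hi] at hsign
    rw [← add_smul]
    convert zero_smul S _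
    linear_combination a j * hsign

/-- Elements of the ideal `(a)` act on Koszul cohomology by zero: `∑ i, c i • contract S i` is a
null-homotopy of multiplication by `∑ i, c i • a i`. -/
lemma diff_sum_smul_contract (c : Fin r → S) {z : Finset (Fin r) → M} {j : ℕ}
    (hz : ∀ t, #t = j + 1 → diff M a z t = 0) {t : Finset (Fin r)} (ht : #t = j) :
    diff M a (∑ i, c i • contract S i z) t = (∑ i, c i • a i) • z t := by
  simp only [map_sum, map_smul, Finset.sum_apply, Pi.smul_apply, sum_smul, smul_assoc]
  refine sum_congr rfl fun i _ => ?_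
  rw [← diff_contract_add_contract_diff a i z t, contract]
  split_ifs with hi
  · rw [add_zero]
  · rw [hz _ (by rw [card_insert_of_notMem hi, ht]), smul_zero, add_zero]

variable (M) in
def CohomologyVanishesBelow (n : ℕ) : Prop :=
  ∀ j < n, ∀ z : Finset (Fin r) → M, (∀ t, #t = j + 1 → diff M a z t = 0) →
    ∃ w : Finset (Fin r) → M, ∀ t, #t = j → diff M a w t = z t

namespace CohomologyVanishesBelow

variable {a}

lemma mono {n n' : ℕ} (h : CohomologyVanishesBelow M a n) (hn : n' ≤ n) :
    CohomologyVanishesBelow M a n' :=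
  fun j hj => h j (hj.trans_le hn)

lemma of_linearEquiv {n : ℕ} (h : CohomologyVanishesBelow M a n) (e : M ≃ₗ[S] N) :
    CohomologyVanishesBelow N a n := by
  intro j hj z hz
  obtain ⟨w, hw⟩ := h j hj (e.symm ∘ z) fun t ht => by
    rw [diff_comp a e.symm, hz t ht, map_zero]
  refine ⟨e ∘ w, fun t ht => ?_⟩
  rw [diff_comp a e, hw t ht, Function.comp_apply, LinearEquiv.apply_symm_apply]

lemma eq_zero_of_forall_smul_eq_zero (h : CohomologyVanishesBelow M a 1) {m : M}
    (hm : ∀ i, a i • m = 0) : m = 0 := by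
  obtain ⟨w, hw⟩ := h 0 one_pos (fun _ => m) fun t ht => by
    obtain ⟨i, rfl⟩ := card_eq_one.1 ht
    rw [diff_singleton, hm]
  simpa [diff_apply] using (hw ∅ card_empty).symm

end CohomologyVanishesBelow

theorem cohomologyVanishesBelow_of_isWeaklyRegular {gs : List S}
    (hgs : ∀ g ∈ gs, g ∈ Ideal.span (Set.range a)) (hreg : IsWeaklyRegular M gs) :
    CohomologyVanishesBelow M a gs.length := by
  induction gs generalizing M with
  | nil => exact fun j hj => absurd hj (Nat.not_lt_zero j)
  | cons g gs ih =>
    obtain ⟨hg, hrest⟩ := (isWeaklyRegular_cons_iff M g gs).1 hreg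
    obtain ⟨c, hc⟩ := (Submodule.mem_span_range_iff_exists_fun S).1 (hgs g List.mem_cons_self)
    have ih := ih (fun x hx => hgs x (List.mem_cons_of_mem g hx)) hrest
    intro j hj z hz
    set w₁ := ∑ i, c i • contract S i z
    have hw₁ : ∀ t, #t = j → diff M a w₁ t = g • z t := fun t ht => by
      rw [diff_sum_smul_contract a c hz ht, hc]
    cases j with
    | zero =>
      refine ⟨0, fun t ht => ?_⟩
      rw [card_eq_zero] at ht
      subst ht
      rw [map_zero, Pi.zero_apply]
      refine hg (?_ : g • 0 = g • z ∅)
      rw [smul_zero, ← hw₁ ∅ rfl, diff_apply, sum_empty]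
    | succ j =>
      -- A primitive of `w₁` modulo `g` gives `w₁ = d v + g • u`, hence `g • z = d w₁ = g • d u`.
      have hw₁_cocycle : ∀ t, #t = j + 1 →
          diff (QuotSMulTop g M) a ((g • ⊤ : Submodule S M).mkQ ∘ w₁) t = 0 := by
        intro t ht
        rw [diff_comp, hw₁ t ht]
        exact QuotSMulTop.mk_eq_zero_iff.2 ⟨_, rfl⟩
      obtain ⟨v, hv⟩ := ih j (Nat.lt_of_succ_lt_succ hj) _ hw₁_cocycle
      obtain ⟨v, rfl⟩ := (Submodule.mkQ_surjective _).comp_left v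
      have hu : ∀ t, ∃ u, #t = j → g • u = w₁ t - diff M a v t := fun t => by
        by_cases ht : #t = j
        · have hπ : (Submodule.Quotient.mk (w₁ t - diff M a v t) : QuotSMulTop g M) = 0 := by
            rw [Submodule.Quotient.mk_sub, sub_eq_zero]
            exact ((diff_comp a _ v t).symm.trans (hv t ht)).symm
          obtain ⟨u, hu⟩ := QuotSMulTop.mk_eq_zero_iff.1 hπ
          exact ⟨u, fun _ => hu⟩
        · exact ⟨0, fun h => absurd h ht⟩
      choose u hu using hu
      refine ⟨u, fun t ht => hg ?_⟩
      calc g • diff M a u t = diff M a (g • u) t := by rw [map_smul, Pi.smul_apply]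
        _ = diff M a (w₁ - diff M a v) t := diff_congr a (fun s hs => hu s hs) ht
        _ = g • z t := by rw [map_sub, diff_diff, sub_zero, hw₁ t ht]

namespace CohomologyVanishesBelow

variable {a}

theorem quotSMulTop {n : ℕ} {x : S} (h : CohomologyVanishesBelow M a (n + 1))
    (hx : IsSMulRegular M x) : CohomologyVanishesBelow (QuotSMulTop x M) a n := by
  intro j hj z hz
  -- Lift the cocycle to `z` with `d z = x • y`; then `y = d w` and `z - x • w` is a cocycle of `M`.
  obtain ⟨z, rfl⟩ := (Submodule.mkQ_surjective _).comp_left z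
  have hy : ∀ t, ∃ y, #t = j + 1 → x • y = diff M a z t := fun t => by
    by_cases ht : #t = j + 1
    · obtain ⟨y, hy⟩ := QuotSMulTop.mk_eq_zero_iff.1 ((diff_comp a _ z t).symm.trans (hz t ht))
      exact ⟨y, fun _ => hy⟩
    · exact ⟨0, fun h => absurd h ht⟩
  choose y hy using hy
  have hy_cocycle : ∀ t, #t = j + 1 + 1 → diff M a y t = 0 := fun t ht => hx <| by
    calc x • diff M a y t = diff M a (x • y) t := by rw [map_smul, Pi.smul_apply]
      _ = diff M a (diff M a z) t := diff_congr a (fun s hs => hy s hs) ht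
      _ = x • 0 := by rw [diff_diff, Pi.zero_apply, smul_zero]
  obtain ⟨w, hw⟩ := h (j + 1) (by omega) y hy_cocycle
  obtain ⟨v, hv⟩ := h j (by omega) (z - x • w) fun t ht => by
    rw [map_sub, map_smul, Pi.sub_apply, Pi.smul_apply, hw t ht, hy t ht, sub_self]
  refine ⟨(x • ⊤ : Submodule S M).mkQ ∘ v, fun t ht => ?_⟩
  have hxw : (x • ⊤ : Submodule S M).mkQ ((x • w) t) = 0 :=
    QuotSMulTop.mk_eq_zero_iff.2 ⟨_, rfl⟩
  rw [diff_comp, hv t ht, Pi.sub_apply, map_sub, hxw, sub_zero]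
  rfl

theorem quotOfList {n : ℕ} {xs : List S} (h : CohomologyVanishesBelow M a (n + xs.length))
    (hxs : IsWeaklyRegular M xs) :
    CohomologyVanishesBelow (M ⧸ (Ideal.ofList xs • ⊤ : Submodule S M)) a n := by
  induction xs generalizing M with
  | nil =>
    exact h.of_linearEquiv
      (Submodule.quotEquivOfEqBot _ (by rw [Ideal.ofList_nil, Submodule.bot_smul])).symm
  | cons x xs ih =>
    obtain ⟨hx, hxs⟩ := (isWeaklyRegular_cons_iff M x xs).1 hxs
    exact (ih (h.quotSMulTop hx) hxs).of_linearEquiv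
      (Submodule.quotOfListConsSMulTopEquivQuotSMulTopInner M x xs).symm

end CohomologyVanishesBelow

end Koszul

theorem possiblyImproperRegular_iff_isWeaklyRegular {A : Type u} [CommRing A] (l : List A)
    (N : Type u) [AddCommGroup N] [Module A N] :
    PossiblyImproperRegular A l N ↔ IsWeaklyRegular N l := by
  induction l generalizing N with
  | nil => simp [PossiblyImproperRegular]
  | cons x l ih =>
    rw [PossiblyImproperRegular, ih, isWeaklyRegular_cons_iff,
      isSMulRegular_iff_right_eq_zero_of_smul]
    have e :=
      Submodule.quotEquivOfEq _ _ (Submodule.ideal_span_singleton_smul x (⊤ : Submodule A N))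
    exact and_congr Iff.rfl (e.isWeaklyRegular_congr l)

theorem exists_isWeaklyRegular_of_lt_pgrade {A : Type u} [CommRing A] {I : Ideal A} {n : ℕ}
    (h : (n : ℕ∞) < pgrade I) :
    ∃ (m : ℕ) (gs : List (MvPolynomial (Fin m) A)),
      (∀ g ∈ gs, g ∈ I.map (algebraMap A (MvPolynomial (Fin m) A))) ∧
        IsWeaklyRegular (MvPolynomial (Fin m) A) gs ∧ n < gs.length := by
  simp only [pgrade, classicalGrade, lt_iSup_iff] at h
  obtain ⟨m, gs, hmem, hreg, hlen⟩ := h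
  exact ⟨m, gs, hmem, (possiblyImproperRegular_iff_isWeaklyRegular _ _).1 hreg,
    by exact_mod_cast hlen⟩

lemma Ideal.smul_top_eq_self {A : Type*} [CommRing A] (J : Ideal A) :
    (J • ⊤ : Submodule A A) = J := by
  rw [Ideal.smul_eq_mul, Ideal.mul_top]

theorem mem_of_forall_mul_mem_of_cohomologyVanishesBelow_one {A : Type u} [CommRing A] {σ : Type*}
    {J : Ideal A} {bs : List A}
    (hvan : Koszul.CohomologyVanishesBelow
      (MvPolynomial σ A ⧸ (J.map (algebraMap A (MvPolynomial σ A)) • ⊤ :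
        Submodule (MvPolynomial σ A) (MvPolynomial σ A)))
      (bs.map (algebraMap A (MvPolynomial σ A))).get 1)
    {z : A} (hz : ∀ b ∈ bs, b * z ∈ J) : z ∈ J := by
  have hCz := hvan.eq_zero_of_forall_smul_eq_zero
    (m := Submodule.Quotient.mk (algebraMap A (MvPolynomial σ A) z)) fun i => by
      rw [← Submodule.Quotient.mk_smul, Submodule.Quotient.mk_eq_zero, Ideal.smul_top_eq_self]
      obtain ⟨b, hb, hbi⟩ := List.mem_map.1 (List.get_mem _ i)
      rw [← hbi, smul_eq_mul, ← map_mul]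
      exact Ideal.mem_map_of_mem _ (hz b hb)
  rw [Submodule.Quotient.mk_eq_zero, Ideal.smul_top_eq_self, MvPolynomial.algebraMap_eq,
    MvPolynomial.mem_map_C_iff] at hCz
  have h0 := hCz 0
  rwa [MvPolynomial.coeff_C, if_pos rfl] at h0

theorem isSMulRegular_quotient_of_lt_pgrade {A : Type u} [CommRing A] {xs : List A} {y : A}
    (hxs : IsWeaklyRegular A xs)
    (hgrade : (xs.length : ℕ∞) < pgrade (Ideal.ofList (xs ++ [y]))) :
    IsSMulRegular (A ⧸ (Ideal.ofList xs • ⊤ : Submodule A A)) y := by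
  obtain ⟨m, gs, hgs, hreg, hlen⟩ := exists_isWeaklyRegular_of_lt_pgrade hgrade
  let S := MvPolynomial (Fin m) A
  let as := (xs ++ [y]).map (algebraMap A S)
  have hspan : ∀ g ∈ gs, g ∈ Ideal.span (Set.range as.get) := by
    rwa [Set.range_list_get, ← Ideal.ofList, ← Ideal.map_ofList]
  have hvan : Koszul.CohomologyVanishesBelow S as.get (1 + (xs.map (algebraMap A S)).length) :=
    (Koszul.cohomologyVanishesBelow_of_isWeaklyRegular _ hspan hreg).mono
      (by rw [List.length_map]; omega)
  have hvan₁ := hvan.quotOfList hxs.of_flat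
  rw [← Ideal.map_ofList] at hvan₁
  rw [isSMulRegular_quotient_iff_mem_of_smul_mem, Ideal.smul_top_eq_self]
  refine fun z hz => mem_of_forall_mul_mem_of_cohomologyVanishesBelow_one hvan₁ fun b hb => ?_
  rcases List.mem_append.1 hb with hb | hb
  · exact Ideal.mul_mem_right _ _ (Ideal.subset_span hb)
  · rwa [List.mem_singleton.1 hb]

theorem IsStrongParamSeq.take {A : Type u} [CommRing A] {l : List A} (hl : IsStrongParamSeq l)
    (k : ℕ) : IsStrongParamSeq (l.take k) := by
  intro i hi
  rw [List.take_take]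
  rw [List.length_take] at hi
  exact hl _ (by omega)

/-- If every strong parameter sequence `x` on `R` satisfies `p-grade((x)R, R) = ℓ(x)`, then
every strong parameter sequence on `R` is a regular sequence, i.e. `R` is Cohen-Macaulay. -/
theorem stmt_12 {R : Type u} [CommRing R]
    (h : ∀ l : List R, IsStrongParamSeq l →
      pgrade (Ideal.span {a | a ∈ l}) = (l.length : ℕ∞)) :
    ∀ l : List R, IsStrongParamSeq l → IsRegularSeq R l := by
  intro l hl
  have hreg : ∀ n ≤ l.length, IsWeaklyRegular R (l.take n) := by
    intro n
    induction n with
    | zero => simp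
    | succ n ih =>
      intro (hn : n < l.length)
      have htake : l.take (n + 1) = l.take n ++ [l[n]] := List.take_succ_eq_append_getElem hn
      have hgrade := h _ (hl.take (n + 1))
      rw [htake] at hgrade ⊢
      rw [isWeaklyRegular_append_iff, isWeaklyRegular_singleton_iff]
      refine ⟨ih (by omega), isSMulRegular_quotient_of_lt_pgrade (ih (by omega)) ?_⟩
      rw [hgrade, List.length_append, List.length_singleton]
      exact_mod_cast Nat.lt_succ_self _
  refine ⟨(possiblyImproperRegular_iff_isWeaklyRegular l R).2 ?_, ?_⟩
  · simpa using hreg l.length le_rfl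
  · simpa using (hl l.length le_rfl).2.1
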